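/- arXiv:1202.0427 — 2 statements merged into one kernel-verified Lean document; each statement's English description precedes it below -/
import Mathlib

section
/- A ring R is right coherent if and only if the intersection of any two finitely generated right ideals of R is finitely generated and the right annihilator of every element of R is finitely generated. -/
open MulOpposite

/-- A ring `R` is right coherent if every finitely generated right ideal
(formalized as an ideal of `Rᵐᵒᵖ`) is finitely presented as a right `R`-module
(i.e. as an `Rᵐᵒᵖ`-module). -/
def RightCoherent (R : Type) [Ring R] : Prop :=
  ∀ I : Ideal Rᵐᵒᵖ, I.FG → Module.FinitePresentation Rᵐᵒᵖ I

/-- The right annihilator `{r : R | s * r = 0}` of `s ∈ R`, viewed as a right ideal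
of `R`, i.e. as an ideal of `Rᵐᵒᵖ`. -/
def rightAnnihilator (R : Type) [Ring R] (s : R) : Ideal Rᵐᵒᵖ where
  carrier := {x | x * op s = 0}
  add_mem' := by
    intro a b ha hb
    simp only [Set.mem_setOf_eq] at *
    rw [add_mul, ha, hb, add_zero]
  zero_mem' := by simp
  smul_mem' := by
    intro c x hx
    simp only [Set.mem_setOf_eq, smul_eq_mul] at *
    rw [mul_assoc, hx, mul_zero]

/-!
For submodules `p`, `q` of a module, the addition map `p × q → p ⊔ q` is onto with kernel
`{(x, -x) | x ∈ p ⊓ q} ≅ p ⊓ q`, and `R ∙ x ≅ R ⧸ torsionOf x`. If finitely generated submodules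
are finitely presented, the kernels of these surjections from finitely generated modules are
finitely generated. Conversely, `span (insert x t) = R ∙ x ⊔ span t` is then finitely presented by
induction on `t`. Right ideals of `R` are the ideals of `Rᵐᵒᵖ`, and `rightAnnihilator R s` is
definitionally the torsion ideal of `op s`.
-/

open Function LinearMap

namespace Submodule

variable {R M : Type*} [Ring R] [AddCommGroup M] [Module R M]

def addToSup (p q : Submodule R M) : (p × q) →ₗ[R] ↥(p ⊔ q) :=
  (p.subtype.coprod q.subtype).codRestrict (p ⊔ q) fun x ↦
    add_mem (mem_sup_left x.1.2) (mem_sup_right x.2.2)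

variable {p q : Submodule R M}

lemma addToSup_surjective : Surjective (addToSup p q) := by
  rintro ⟨y, hy⟩
  obtain ⟨a, ha, b, hb, rfl⟩ := mem_sup.mp hy
  exact ⟨(⟨a, ha⟩, ⟨b, hb⟩), rfl⟩

lemma ker_addToSup :
    ker (addToSup p q) = range ((inclusion inf_le_left).prod (-inclusion inf_le_right)) := by
  ext x
  constructor
  · intro h
    have hx : (x.1 : M) = -x.2 := eq_neg_of_add_eq_zero_left (congrArg Subtype.val h)
    exact ⟨⟨x.1, x.1.2, hx ▸ neg_mem x.2.2⟩, Prod.ext rfl (Subtype.ext (by simp [hx]))⟩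
  · rintro ⟨y, rfl⟩
    exact Subtype.ext (add_neg_cancel (y : M))

lemma fg_ker_addToSup_iff : (ker (addToSup p q)).FG ↔ (p ⊓ q).FG := by
  have hinj : Injective ((inclusion (inf_le_left : p ⊓ q ≤ p)).prod (-inclusion inf_le_right)) :=
    fun x y h ↦ inclusion_injective _ (congrArg Prod.fst h)
  rw [ker_addToSup, ← Module.Finite.iff_fg, ← Module.Finite.iff_fg,
    Module.Finite.equiv_iff (LinearEquiv.ofInjective _ hinj)]

lemma fg_inf_of_finitePresentation_sup [Module.FinitePresentation R ↥(p ⊔ q)] (hp : p.FG)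
    (hq : q.FG) : (p ⊓ q).FG := by
  have := Module.Finite.iff_fg.mpr hp
  have := Module.Finite.iff_fg.mpr hq
  exact fg_ker_addToSup_iff.mp (Module.FinitePresentation.fg_ker _ addToSup_surjective)

lemma finitePresentation_sup [Module.FinitePresentation R p] [Module.FinitePresentation R q]
    (h : (p ⊓ q).FG) : Module.FinitePresentation R ↥(p ⊔ q) :=
  Module.finitePresentation_of_surjective _ addToSup_surjective (fg_ker_addToSup_iff.mpr h)

lemma finitePresentation_span_singleton_iff (x : M) :
    Module.FinitePresentation R (R ∙ x) ↔ (Ideal.torsionOf R M x).FG := by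
  rw [← (Ideal.quotTorsionOfEquivSpanSingleton R M x).finitePresentation_iff,
    ← Module.FinitePresentation.fg_ker_iff _ (mkQ_surjective _), ker_mkQ]
  rfl

lemma finitePresentation_of_fg
    (hspan : ∀ x : M, Module.FinitePresentation R (R ∙ x))
    (hinf : ∀ p q : Submodule R M, p.FG → q.FG → (p ⊓ q).FG) {N : Submodule R M} (hN : N.FG) :
    Module.FinitePresentation R N := by
  classical
  obtain ⟨t, rfl⟩ := hN
  induction t using Finset.induction_on with
  | empty =>
    rw [Finset.coe_empty, span_empty]
    infer_instance
  | insert x t _ ih =>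
    have := hspan x
    rw [Finset.coe_insert, span_insert]
    exact finitePresentation_sup (hinf _ _ (fg_span_singleton x) ⟨t, rfl⟩)

theorem forall_fg_finitePresentation_iff :
    (∀ N : Submodule R M, N.FG → Module.FinitePresentation R N) ↔
      (∀ p q : Submodule R M, p.FG → q.FG → (p ⊓ q).FG) ∧ ∀ x : M, (Ideal.torsionOf R M x).FG := by
  refine ⟨fun h ↦ ⟨fun p q hp hq ↦ ?_, fun x ↦ ?_⟩, fun ⟨hinf, htors⟩ _ ↦ ?_⟩
  · have := h _ (hp.sup hq)
    exact fg_inf_of_finitePresentation_sup hp hq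
  · exact (finitePresentation_span_singleton_iff x).mp (h _ (fg_span_singleton x))
  · exact finitePresentation_of_fg (fun x ↦ (finitePresentation_span_singleton_iff x).mpr (htors x))
      hinf

end Submodule

/-- A ring `R` is right coherent iff the intersection of any two finitely generated
right ideals is finitely generated and the right annihilator of every element of `R`
is finitely generated. -/
theorem rightCoherent_iff_inf_fg_and_ann_fg (R : Type) [Ring R] :
    RightCoherent R ↔
      ((∀ I J : Ideal Rᵐᵒᵖ, I.FG → J.FG → (I ⊓ J).FG) ∧
        (∀ s : R, (rightAnnihilator R s).FG)) :=
  Submodule.forall_fg_finitePresentation_iff.trans (and_congr_right' op_surjective.forall)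
end

section
/- A module M is absolutely pure if and only if Ext¹_R(F, M) = 0 for every finitely presented right R-module F. -/
open TensorProduct MulOpposite

noncomputable section

/-- The tensor product `M ⊗_R N` of a right `R`-module `M` and a left `R`-module `N`,
constructed as a quotient of `M ⊗_ℤ N` by the balancing relations. -/
def BalancedRel (R : Type) [Ring R] (M N : Type) [AddCommGroup M] [Module Rᵐᵒᵖ M]
    [AddCommGroup N] [Module R N] : Submodule ℤ (M ⊗[ℤ] N) :=
  Submodule.span ℤ {x | ∃ (m : M) (r : R) (n : N),
    x = (op r • m) ⊗ₜ[ℤ] n - m ⊗ₜ[ℤ] (r • n)}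

def RTensor (R : Type) [Ring R] (M N : Type) [AddCommGroup M] [Module Rᵐᵒᵖ M]
    [AddCommGroup N] [Module R N] : Type :=
  M ⊗[ℤ] N ⧸ BalancedRel R M N

instance (R : Type) [Ring R] (M N : Type) [AddCommGroup M] [Module Rᵐᵒᵖ M]
    [AddCommGroup N] [Module R N] : AddCommGroup (RTensor R M N) :=
  inferInstanceAs (AddCommGroup (M ⊗[ℤ] N ⧸ BalancedRel R M N))

/-- `m ⊗ n` as an element of `RTensor R M N`. -/
def rtmk (R : Type) [Ring R] {M N : Type} [AddCommGroup M] [Module Rᵐᵒᵖ M]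
    [AddCommGroup N] [Module R N] (m : M) (n : N) : RTensor R M N :=
  Submodule.Quotient.mk (m ⊗ₜ[ℤ] n)

/-- The map `M ⊗_R N → M ⊗_R N'` induced by a map `f : N → N'` of left modules. -/
def lTensorMap (R : Type) [Ring R] {M N N' : Type} [AddCommGroup M] [Module Rᵐᵒᵖ M]
    [AddCommGroup N] [Module R N] [AddCommGroup N'] [Module R N']
    (f : N →ₗ[R] N') : RTensor R M N →ₗ[ℤ] RTensor R M N' :=
  Submodule.mapQ _ _ (LinearMap.lTensor M (f.restrictScalars ℤ)) (by
    rw [BalancedRel, Submodule.span_le]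
    rintro x ⟨m, r, n, rfl⟩
    refine Submodule.subset_span ⟨m, r, f n, ?_⟩
    exact (map_sub (LinearMap.lTensor M (f.restrictScalars ℤ)) _ _).trans (by simp))

/-- The map `M ⊗_R N → M' ⊗_R N` induced by a map `g : M → M'` of right modules. -/
def rTensorMap (R : Type) [Ring R] {M M' N : Type} [AddCommGroup M] [Module Rᵐᵒᵖ M]
    [AddCommGroup M'] [Module Rᵐᵒᵖ M'] [AddCommGroup N] [Module R N]
    (g : M →ₗ[Rᵐᵒᵖ] M') : RTensor R M N →ₗ[ℤ] RTensor R M' N :=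
  Submodule.mapQ _ _ (LinearMap.rTensor N (g.restrictScalars ℤ)) (by
    rw [BalancedRel, Submodule.span_le]
    rintro x ⟨m, r, n, rfl⟩
    refine Submodule.subset_span ⟨g m, r, n, ?_⟩
    exact (map_sub (LinearMap.rTensor N (g.restrictScalars ℤ)) _ _).trans (by simp))

/-- A right `R`-module `M` is flat if tensoring with it preserves injectivity of
maps of left `R`-modules. -/
def IsFlatRight (R : Type) [Ring R] (M : Type) [AddCommGroup M] [Module Rᵐᵒᵖ M] : Prop :=
  ∀ (A B : Type) [AddCommGroup A] [Module R A] [AddCommGroup B] [Module R B]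
    (f : A →ₗ[R] B), Function.Injective f →
      Function.Injective (lTensorMap R (M := M) f)

/-- A map of right `R`-modules is pure if tensoring with any left module preserves
its injectivity. -/
def IsPure (R : Type) [Ring R] {M N : Type} [AddCommGroup M] [Module Rᵐᵒᵖ M]
    [AddCommGroup N] [Module Rᵐᵒᵖ N] (j : M →ₗ[Rᵐᵒᵖ] N) : Prop :=
  ∀ (L : Type) [AddCommGroup L] [Module R L],
    Function.Injective (rTensorMap R (N := L) j)

/-- A right `R`-module `M` is absolutely pure if every monomorphism with domain `M`
is a pure monomorphism. -/
def AbsolutelyPure (R : Type) [Ring R] (M : Type) [AddCommGroup M] [Module Rᵐᵒᵖ M] : Prop :=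
  ∀ (N : Type) [AddCommGroup N] [Module Rᵐᵒᵖ N] (j : M →ₗ[Rᵐᵒᵖ] N),
    Function.Injective j → IsPure R j

/-!
Both conditions are equivalent to FP-injectivity: every finite system of linear equations over
`M` that respects all linear relations among its rows has a solution in `M`. Such a system is
solvable in `M` iff a certain element vanishes in `M ⊗_R L`, with `L` presented by the columns
of the system; hence solutions descend along pure monomorphisms, and embedding `M` into an
injective module, where these systems are always solvable, gives FP-injectivity. Conversely,
by right exactness of `M ⊗_R -` an element of `M ⊗_R L` dying in `N ⊗_R L` is witnessed by
finitely many equations solvable in `N`, which FP-injectivity solves in `M`. Finally, `Ext¹(F, M)`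
computed from a resolution starting with a finite presentation `R^ι → R^κ → F` vanishes iff every
map `R^ι → M` killing the relations factors through `R^κ`.
-/

section RTensorAPI

variable {R : Type} [Ring R] {M N : Type} [AddCommGroup M] [Module Rᵐᵒᵖ M]
  [AddCommGroup N] [Module R N]

lemma rtmk_add_left (m m' : M) (n : N) : rtmk R (m + m') n = rtmk R m n + rtmk R m' n := by
  rw [rtmk, add_tmul]; rfl

lemma rtmk_add_right (m : M) (n n' : N) : rtmk R m (n + n') = rtmk R m n + rtmk R m n' := by
  rw [rtmk, tmul_add]; rfl

@[simp] lemma rtmk_zero_right (m : M) : rtmk R m (0 : N) = 0 := by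
  rw [rtmk, tmul_zero]; rfl

lemma rtmk_smul (r : R) (m : M) (n : N) : rtmk R (op r • m) n = rtmk R m (r • n) :=
  (Submodule.Quotient.eq _).2 (Submodule.subset_span ⟨m, r, n, rfl⟩)

namespace RTensor

def mkHom : M →+ N →+ RTensor R M N :=
  AddMonoidHom.mk' (fun m => AddMonoidHom.mk' (rtmk R m) (rtmk_add_right m))
    fun m m' => by ext n; exact rtmk_add_left m m' n

variable {A : Type} [AddCommGroup A]

def lift (b : M →+ N →+ A) (hb : ∀ (r : R) m n, b (op r • m) n = b m (r • n)) :
    RTensor R M N →+ A :=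
  (Submodule.liftQ _ (TensorProduct.liftAddHom b fun z m n => by simp [map_zsmul]).toIntLinearMap
    (by
      rw [BalancedRel, Submodule.span_le]
      rintro _ ⟨m, r, n, rfl⟩
      simp [hb])).toAddMonoidHom

@[simp] lemma lift_rtmk (b : M →+ N →+ A) (hb : ∀ (r : R) m n, b (op r • m) n = b m (r • n))
    (m : M) (n : N) : lift b hb (rtmk R m n) = b m n := rfl

end RTensor

end RTensorAPI

section RightExactness

variable {R : Type} [Ring R] {M : Type} [AddCommGroup M] [Module Rᵐᵒᵖ M]
  {ι L : Type} [AddCommGroup L] [Module R L]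

/-- The image of `y ⊗ w` under `M ⊗_R R^(ι) ≃ M^(ι)`. -/
def tmulFinsupp (y : M) (w : ι →₀ R) : ι →₀ M :=
  w.mapRange (fun r => op r • y) (by simp)

@[simp] lemma tmulFinsupp_apply (y : M) (w : ι →₀ R) (i : ι) :
    tmulFinsupp y w i = op (w i) • y :=
  Finsupp.mapRange_apply ..

@[simp] lemma tmulFinsupp_zero_left (w : ι →₀ R) : tmulFinsupp (0 : M) w = 0 := by
  ext; simp

lemma tmulFinsupp_add_left (y y' : M) (w : ι →₀ R) :
    tmulFinsupp (y + y') w = tmulFinsupp y w + tmulFinsupp y' w := by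
  ext; simp [smul_add]

lemma tmulFinsupp_add_right (y : M) (w w' : ι →₀ R) :
    tmulFinsupp y (w + w') = tmulFinsupp y w + tmulFinsupp y w' := by
  ext; simp [add_smul]

lemma tmulFinsupp_neg_left (y : M) (w : ι →₀ R) : tmulFinsupp (-y) w = -tmulFinsupp y w := by
  ext; simp

lemma tmulFinsupp_smul_left (r : R) (y : M) (w : ι →₀ R) :
    tmulFinsupp (op r • y) w = tmulFinsupp y (r • w) := by
  ext; simp [mul_smul]

lemma tmulFinsupp_single (y : M) (i : ι) (r : R) :
    tmulFinsupp y (Finsupp.single i r) = Finsupp.single i (op r • y) := by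
  ext j; by_cases h : i = j <;> simp [h]

lemma sum_tmulFinsupp_apply {X : Type} [AddCommGroup X] [Module Rᵐᵒᵖ X] {σ : Type} [Fintype σ]
    (z : σ → X) (w : σ → ι →₀ R) (i : ι) :
    (∑ s, tmulFinsupp (z s) (w s)) i = Fintype.linearCombination Rᵐᵒᵖ z fun s => op (w s i) := by
  simp [Finsupp.finsetSum_apply, Fintype.linearCombination_apply]

/-- `M ⊗_R q` for `q : R^(ι) → L`, read through `M ⊗_R R^(ι) ≃ M^(ι)`. -/
def tmulSum (q : (ι →₀ R) →ₗ[R] L) : (ι →₀ M) →+ RTensor R M L :=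
  Finsupp.liftAddHom fun i => RTensor.mkHom.flip (q (Finsupp.single i 1))

lemma tmulSum_single (q : (ι →₀ R) →ₗ[R] L) (i : ι) (m : M) :
    tmulSum q (Finsupp.single i m) = rtmk R m (q (Finsupp.single i 1)) :=
  Finsupp.liftAddHom_apply_single ..

lemma tmulSum_tmulFinsupp (q : (ι →₀ R) →ₗ[R] L) (y : M) (w : ι →₀ R) :
    tmulSum q (tmulFinsupp y w) = rtmk R y (q w) := by
  induction w using Finsupp.induction_linear with
  | zero => simp [tmulFinsupp]
  | add w w' hw hw' => rw [tmulFinsupp_add_right, map_add, hw, hw', map_add, rtmk_add_right]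
  | single i r =>
    rw [tmulFinsupp_single, tmulSum_single, rtmk_smul, ← map_smul, Finsupp.smul_single_one]

lemma tmulSum_surjective {q : (ι →₀ R) →ₗ[R] L} (hq : Function.Surjective q) :
    Function.Surjective (tmulSum (M := M) q) := by
  intro x
  obtain ⟨t, rfl⟩ := Submodule.Quotient.mk_surjective _ x
  induction t with
  | zero => exact ⟨0, map_zero _⟩
  | tmul m n =>
    obtain ⟨w, rfl⟩ := hq n
    exact ⟨tmulFinsupp m w, tmulSum_tmulFinsupp q m w⟩
  | add s t hs ht =>
    obtain ⟨u, hu⟩ := hs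
    obtain ⟨u', hu'⟩ := ht
    exact ⟨u + u', by rw [map_add, hu, hu']; rfl⟩

lemma rTensorMap_tmulSum {N : Type} [AddCommGroup N] [Module Rᵐᵒᵖ N] (j : M →ₗ[Rᵐᵒᵖ] N)
    (q : (ι →₀ R) →ₗ[R] L) (u : ι →₀ M) :
    rTensorMap R j (tmulSum q u) = tmulSum q (u.mapRange j (map_zero j)) := by
  induction u using Finsupp.induction_linear with
  | zero => simp
  | add u u' hu hu' => simp only [map_add, hu, hu', Finsupp.mapRange_add (map_add j)]
  | single i m => rw [Finsupp.mapRange_single, tmulSum_single, tmulSum_single]; rfl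

/-- The image of `M ⊗_R ker q` in `M^(ι)`. -/
def tensorRelations (q : (ι →₀ R) →ₗ[R] L) : AddSubgroup (ι →₀ M) :=
  AddSubgroup.closure {u | ∃ y w, q w = 0 ∧ tmulFinsupp y w = u}

lemma tensorRelations_le_ker (q : (ι →₀ R) →ₗ[R] L) :
    tensorRelations (M := M) q ≤ (tmulSum q).ker :=
  (AddSubgroup.closure_le _).2 <| by
    rintro _ ⟨y, w, hw, rfl⟩
    simp [AddMonoidHom.mem_ker, tmulSum_tmulFinsupp, hw]

theorem ker_tmulSum {q : (ι →₀ R) →ₗ[R] L} (hq : Function.Surjective q) :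
    (tmulSum q).ker = tensorRelations (M := M) q := by
  refine le_antisymm (fun u hu => ?_) (tensorRelations_le_ker q)
  let W := tensorRelations (M := M) q
  let mk : (ι →₀ M) →+ (ι →₀ M) ⧸ W := QuotientAddGroup.mk' W
  have mk_eq {y : M} {w w' : ι →₀ R} (h : q w = q w') :
      mk (tmulFinsupp y w) = mk (tmulFinsupp y w') := by
    refine QuotientAddGroup.eq_iff_sub_mem.2 <| AddSubgroup.subset_closure ⟨y, w - w', ?_, ?_⟩
    · rw [map_sub, h, sub_self]
    · ext; simp [sub_smul]
  -- The inverse `M ⊗_R L → M^(ι) ⧸ W` sends `y ⊗ l` to `y ⊗ w` for any lift `w` of `l`.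
  let sec := Function.surjInv hq
  have hsec : ∀ l, q (sec l) = l := Function.surjInv_eq hq
  let b : M →+ L →+ (ι →₀ M) ⧸ W := AddMonoidHom.mk'
    (fun y => AddMonoidHom.mk' (fun l => mk (tmulFinsupp y (sec l))) fun l l' => by
      rw [mk_eq (w' := sec l + sec l') (by simp [hsec]), tmulFinsupp_add_right, map_add])
    fun y y' => by ext l; simp [tmulFinsupp_add_left]
  have hb (r : R) (y : M) (l : L) : b (op r • y) l = b y (r • l) := by
    simp only [b, AddMonoidHom.mk'_apply, tmulFinsupp_smul_left]
    exact mk_eq (by simp [hsec])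
  have hΨ (v : ι →₀ M) : RTensor.lift b hb (tmulSum q v) = mk v := by
    induction v using Finsupp.induction_linear with
    | zero => simp
    | add v v' hv hv' => rw [map_add, map_add, hv, hv', map_add]
    | single i m =>
      rw [tmulSum_single, RTensor.lift_rtmk]
      simp only [b, AddMonoidHom.mk'_apply]
      rw [mk_eq (y := m) (w' := Finsupp.single i 1) (hsec _), tmulFinsupp_single, op_one, one_smul]
  have := hΨ u
  rw [AddMonoidHom.mem_ker.1 hu, map_zero] at this
  exact (QuotientAddGroup.eq_zero_iff u).1 this.symm

lemma exists_fin_sum_tmulFinsupp_eq {q : (ι →₀ R) →ₗ[R] L} {u : ι →₀ M}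
    (hu : u ∈ tensorRelations q) : ∃ (k : ℕ) (y : Fin k → M) (w : Fin k → ι →₀ R),
      (∀ s, q (w s) = 0) ∧ ∑ s, tmulFinsupp (y s) (w s) = u := by
  induction hu using AddSubgroup.closure_induction with
  | mem u hu =>
    obtain ⟨y, w, hw, rfl⟩ := hu
    exact ⟨1, fun _ => y, fun _ => w, fun _ => hw, by simp⟩
  | zero => exact ⟨0, Fin.elim0, Fin.elim0, fun s => s.elim0, by simp⟩
  | add u u' _ _ hu hu' =>
    obtain ⟨k, y, w, hw, rfl⟩ := hu
    obtain ⟨k', y', w', hw', rfl⟩ := hu'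
    refine ⟨k + k', Fin.append y y', Fin.append w w',
      fun s => s.addCases (fun i => by simpa using hw i) (fun i => by simpa using hw' i), ?_⟩
    simp [Fin.sum_univ_add]
  | neg u _ hu =>
    obtain ⟨k, y, w, hw, rfl⟩ := hu
    exact ⟨k, -y, w, hw, by simp [tmulFinsupp_neg_left]⟩

end RightExactness

section Descent

variable {R : Type} [Ring R] {M N : Type} [AddCommGroup M] [Module Rᵐᵒᵖ M]
  [AddCommGroup N] [Module Rᵐᵒᵖ N] {ι σ : Type} [Fintype σ]

lemma exists_sum_tmulFinsupp_eq_of_mem_tensorRelations (w : σ → ι →₀ R) {u : ι →₀ M}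
    (hu : u ∈ tensorRelations (Submodule.span R (Set.range w)).mkQ) :
    ∃ z : σ → M, ∑ s, tmulFinsupp (z s) (w s) = u := by
  classical
  let combine : (σ → M) →+ ι →₀ M := AddMonoidHom.mk' (fun z => ∑ s, tmulFinsupp (z s) (w s))
    fun z z' => by simp [tmulFinsupp_add_left, Finset.sum_add_distrib]
  suffices tensorRelations (Submodule.span R (Set.range w)).mkQ ≤ combine.range from this hu
  refine (AddSubgroup.closure_le _).2 ?_
  rintro _ ⟨y, x, hx, rfl⟩
  rw [Submodule.mkQ_apply, Submodule.Quotient.mk_eq_zero] at hx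
  induction hx using Submodule.span_induction generalizing y with
  | mem x hx =>
    obtain ⟨s, rfl⟩ := hx
    refine ⟨Pi.single s y, (Finset.sum_eq_single s (fun t _ ht => ?_) (by simp)).trans (by simp)⟩
    rw [Pi.single_eq_of_ne ht, tmulFinsupp_zero_left]
  | zero => exact ⟨0, by ext; simp [combine]⟩
  | add x x' _ _ hx hx' =>
    obtain ⟨z, hz⟩ := hx y
    obtain ⟨z', hz'⟩ := hx' y
    exact ⟨z + z', by rw [map_add, hz, hz', tmulFinsupp_add_right]⟩
  | smul r x _ hx => simpa only [tmulFinsupp_smul_left] using hx (op r • y)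

theorem IsPure.exists_sum_tmulFinsupp_eq {j : M →ₗ[Rᵐᵒᵖ] N} (hj : IsPure R j)
    (w : σ → ι →₀ R) {u : ι →₀ M} {z' : σ → N}
    (h : ∑ s, tmulFinsupp (z' s) (w s) = u.mapRange j (map_zero j)) :
    ∃ z : σ → M, ∑ s, tmulFinsupp (z s) (w s) = u := by
  -- `u` is such a combination iff it vanishes in `M ⊗_R (R^(ι) ⧸ span w)`.
  let q := (Submodule.span R (Set.range w)).mkQ
  have hN : tmulSum q (u.mapRange j (map_zero j)) = 0 := by
    rw [← h, map_sum]
    refine Finset.sum_eq_zero fun s _ => ?_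
    rw [tmulSum_tmulFinsupp, show q (w s) = 0 from
      (Submodule.Quotient.mk_eq_zero _).2 (Submodule.subset_span (Set.mem_range_self s)),
      rtmk_zero_right]
  have hM : tmulSum q u = 0 := hj _ (by rw [rTensorMap_tmulSum, hN, map_zero])
  rw [← AddMonoidHom.mem_ker, ker_tmulSum (Submodule.mkQ_surjective _)] at hM
  exact exists_sum_tmulFinsupp_eq_of_mem_tensorRelations w hM

end Descent

lemma LinearMap.eq_fintypeLinearCombination {R X κ : Type*} [Semiring R] [AddCommMonoid X]
    [Module R X] [Fintype κ] [DecidableEq κ] (ψ : (κ → R) →ₗ[R] X) :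
    ψ = Fintype.linearCombination R fun s => ψ (Pi.single s 1) :=
  LinearMap.pi_ext' fun s => LinearMap.ext_ring (by simp)

section FPInjective

variable {R : Type} [Ring R] {M N : Type} [AddCommGroup M] [Module Rᵐᵒᵖ M]
  [AddCommGroup N] [Module Rᵐᵒᵖ N]

/-- `Hom(-, M)` is exact on every finite presentation `R^ι → R^κ`; equivalently, every map
to `M` from a finitely generated submodule of a finite free module extends to the whole module. -/
def IsFPInjective (R : Type) [Ring R] (M : Type) [AddCommGroup M] [Module Rᵐᵒᵖ M] : Prop :=
  ∀ (ι κ : Type) [Fintype ι] [Fintype κ] (v : ι → κ → Rᵐᵒᵖ) (φ : (ι → Rᵐᵒᵖ) →ₗ[Rᵐᵒᵖ] M),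
    LinearMap.ker (Fintype.linearCombination Rᵐᵒᵖ v) ≤ LinearMap.ker φ →
      ∃ ψ : (κ → Rᵐᵒᵖ) →ₗ[Rᵐᵒᵖ] M, ψ ∘ₗ Fintype.linearCombination Rᵐᵒᵖ v = φ

theorem Module.Injective.isFPInjective [Module.Injective Rᵐᵒᵖ M] : IsFPInjective R M := by
  intro ι κ _ _ v φ hφ
  let f := Fintype.linearCombination Rᵐᵒᵖ v
  obtain ⟨ψ, hψ⟩ := Module.Injective.extension_property Rᵐᵒᵖ M _ _
    ((LinearMap.ker f).liftQ f le_rfl)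
    (LinearMap.ker_eq_bot.1 (Submodule.ker_liftQ_eq_bot _ _ _ le_rfl))
    ((LinearMap.ker f).liftQ φ hφ)
  exact ⟨ψ, LinearMap.ext fun x => LinearMap.congr_fun hψ (Submodule.Quotient.mk x)⟩

theorem IsPure.isFPInjective {j : M →ₗ[Rᵐᵒᵖ] N} (hj : IsPure R j) (hN : IsFPInjective R N) :
    IsFPInjective R M := by
  classical
  intro ι κ _ _ v φ hφ
  obtain ⟨ψN, hψN⟩ := hN ι κ v (j ∘ₗ φ) (hφ.trans (LinearMap.ker_le_ker_comp φ j))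
  let w s : ι →₀ R := Finsupp.equivFunOnFinite.symm fun t => unop (v t s)
  have hw t : (fun s => op (w s t)) = v t := by funext s; simp [w]
  obtain ⟨z, hz⟩ := hj.exists_sum_tmulFinsupp_eq w
    (u := Finsupp.equivFunOnFinite.symm fun t => φ (Pi.single t 1))
    (z' := fun s => ψN (Pi.single s 1)) (by
      ext t
      rw [sum_tmulFinsupp_apply, hw, ← ψN.eq_fintypeLinearCombination]
      simpa using LinearMap.congr_fun hψN (Pi.single t 1))
  refine ⟨Fintype.linearCombination Rᵐᵒᵖ z, LinearMap.pi_ext' fun t => LinearMap.ext_ring ?_⟩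
  simpa [sum_tmulFinsupp_apply, hw] using DFunLike.congr_fun hz t

theorem IsFPInjective.exists_sum_tmulFinsupp_eq (hM : IsFPInjective R M) {j : M →ₗ[Rᵐᵒᵖ] N}
    (hj : Function.Injective j) {ι σ : Type} [Fintype σ] (w : σ → ι →₀ R) {u : ι →₀ M}
    {z' : σ → N} (h : ∑ s, tmulFinsupp (z' s) (w s) = u.mapRange j (map_zero j)) :
    ∃ z : σ → M, ∑ s, tmulFinsupp (z s) (w s) = u := by
  classical
  -- Outside the finite set `T` every equation reads `0 = 0`.
  let T := u.support ∪ Finset.univ.biUnion fun s => (w s).support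
  let v (l : T) (s : σ) : Rᵐᵒᵖ := op (w s l)
  let φ := Fintype.linearCombination Rᵐᵒᵖ fun l : T => u l
  have hφ : Fintype.linearCombination Rᵐᵒᵖ z' ∘ₗ Fintype.linearCombination Rᵐᵒᵖ v = j ∘ₗ φ :=
    LinearMap.pi_ext' fun l => LinearMap.ext_ring <| by
      simpa [φ, v, sum_tmulFinsupp_apply] using DFunLike.congr_fun h (l : ι)
  obtain ⟨ψ, hψ⟩ := hM T σ v φ fun x hx => hj <| by
    simpa using (LinearMap.congr_fun hφ x).symm.trans (by simp [LinearMap.mem_ker.1 hx])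
  refine ⟨fun s => ψ (Pi.single s 1), Finsupp.ext fun l => ?_⟩
  rw [sum_tmulFinsupp_apply, ← ψ.eq_fintypeLinearCombination]
  by_cases hl : l ∈ T
  · simpa [φ, v] using LinearMap.congr_fun hψ (Pi.single ⟨l, hl⟩ 1)
  · simp only [T, Finset.mem_union, Finset.mem_biUnion, Finset.mem_univ, true_and,
      Finsupp.mem_support_iff, not_or, not_exists, not_not] at hl
    have : (fun s => op (w s l)) = 0 := funext fun s => by simp [hl.2 s]
    rw [this, map_zero, hl.1]

theorem IsFPInjective.isPure (hM : IsFPInjective R M) {j : M →ₗ[Rᵐᵒᵖ] N}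
    (hj : Function.Injective j) : IsPure R j := by
  intro L _ _
  rw [injective_iff_map_eq_zero]
  intro x hx
  let q := Finsupp.linearCombination R (id : L → L)
  have hq : Function.Surjective q := Finsupp.linearCombination_id_surjective R L
  obtain ⟨u, rfl⟩ := tmulSum_surjective (M := M) hq x
  rw [rTensorMap_tmulSum, ← AddMonoidHom.mem_ker, ker_tmulSum hq] at hx
  obtain ⟨k, y, w, hw, hyw⟩ := exists_fin_sum_tmulFinsupp_eq hx
  obtain ⟨z, rfl⟩ := hM.exists_sum_tmulFinsupp_eq hj w hyw
  rw [← AddMonoidHom.mem_ker, ker_tmulSum hq]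
  exact sum_mem fun s _ => AddSubgroup.subset_closure ⟨z s, w s, hw s, rfl⟩

end FPInjective

section AbsolutelyPure

variable {R : Type} [Ring R] {M : Type} [AddCommGroup M] [Module Rᵐᵒᵖ M]

theorem AbsolutelyPure.isFPInjective (h : AbsolutelyPure R M) : IsFPInjective R M := by
  let E := CategoryTheory.Injective.under (ModuleCat.of Rᵐᵒᵖ M)
  have : Module.Injective Rᵐᵒᵖ E := Module.injective_module_of_injective_object Rᵐᵒᵖ E
    (inj := inferInstanceAs (CategoryTheory.Injective E))
  let i := CategoryTheory.Injective.ι (ModuleCat.of Rᵐᵒᵖ M)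
  exact (h E i.hom ((ModuleCat.mono_iff_injective i).1 inferInstance)).isFPInjective
    Module.Injective.isFPInjective

theorem absolutelyPure_iff_isFPInjective : AbsolutelyPure R M ↔ IsFPInjective R M :=
  ⟨AbsolutelyPure.isFPInjective, fun h _ _ _ _ hj => h.isPure hj⟩

end AbsolutelyPure

section Ext

open CategoryTheory

variable {R : Type} [Ring R] {ι κ : Type} [Fintype ι] (v : ι → κ → Rᵐᵒᵖ)

/-- The presentation `R^ι → R^κ`, continued to the left as in `ProjectiveResolution.ofComplex`. -/
def presentationComplex : ChainComplex (ModuleCat Rᵐᵒᵖ) ℕ :=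
  ChainComplex.mk' (ModuleCat.of Rᵐᵒᵖ (κ → Rᵐᵒᵖ)) (ModuleCat.of Rᵐᵒᵖ (ι → Rᵐᵒᵖ))
    (ModuleCat.ofHom (Fintype.linearCombination Rᵐᵒᵖ v)) fun f =>
      ⟨_, Projective.d f, (Category.assoc _ _ _).trans
        ((congrArg _ (Limits.kernel.condition f)).trans Limits.comp_zero)⟩

lemma presentationComplex_d_1_0 :
    (presentationComplex v).d 1 0 = ModuleCat.ofHom (Fintype.linearCombination Rᵐᵒᵖ v) := by
  simp [presentationComplex]

lemma presentationComplex_exactAt_succ (n : ℕ) : (presentationComplex v).ExactAt (n + 1) := by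
  rw [HomologicalComplex.exactAt_iff' _ (n + 2) (n + 1) n (by simp) (by simp)]
  dsimp only [HomologicalComplex.sc', HomologicalComplex.shortComplexFunctor']
  obtain ⟨e, he⟩ : ∃ e : (presentationComplex v).X (n + 2) ≅
      Projective.syzygies ((presentationComplex v).d (n + 1) n),
      (presentationComplex v).d (n + 2) (n + 1) = e.hom ≫ Projective.d _ :=
    ⟨ChainComplex.mk'XIso _ _ _ _ n, ChainComplex.mk'_d _ _ _ _ n⟩
  refine (ShortComplex.exact_iff_of_iso ?_).1 (exact_d_f ((presentationComplex v).d (n + 1) n))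
  exact ShortComplex.isoMk e.symm (Iso.refl _) (Iso.refl _)
    (by dsimp; rw [he, Iso.inv_hom_id_assoc, Category.comp_id])
    (by dsimp; rw [Category.id_comp, Category.comp_id])

instance [Fintype κ] (n : ℕ) : Projective ((presentationComplex v).X n) := by
  obtain (_ | _ | _ | n) := n
  · exact (IsProjective.iff_projective (P := κ → Rᵐᵒᵖ)).mp inferInstance
  · exact (IsProjective.iff_projective (P := ι → Rᵐᵒᵖ)).mp inferInstance
  all_goals apply Projective.projective_over

lemma presentationComplex_d_comp_eq_zero_iff {Y : ModuleCat Rᵐᵒᵖ}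
    (f : (presentationComplex v).X 1 ⟶ Y) :
    (presentationComplex v).d 2 1 ≫ f = 0 ↔
      LinearMap.ker (Fintype.linearCombination Rᵐᵒᵖ v) ≤ LinearMap.ker f.hom := by
  have hd x : (presentationComplex v).d 1 0 x = Fintype.linearCombination Rᵐᵒᵖ v x := by
    rw [presentationComplex_d_1_0]; rfl
  have hexact := presentationComplex_exactAt_succ v 0
  rw [HomologicalComplex.exactAt_iff' _ 2 1 0 (by simp) (by simp),
    ShortComplex.moduleCat_exact_iff] at hexact
  constructor
  · intro h x hx
    obtain ⟨y, rfl⟩ := hexact x ((hd x).trans hx)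
    change ((presentationComplex v).d 2 1 ≫ f) y = 0
    rw [h]; rfl
  · intro h
    ext y
    refine h ((hd _).symm.trans ?_)
    change ((presentationComplex v).d 2 1 ≫ (presentationComplex v).d 1 0) y = 0
    rw [HomologicalComplex.d_comp_d]; rfl

variable [Fintype κ] {F : Type} [AddCommGroup F] [Module Rᵐᵒᵖ F]
  {p : (κ → Rᵐᵒᵖ) →ₗ[Rᵐᵒᵖ] F}

def presentationResolution (hp : Function.Surjective p)
    (hv : LinearMap.range (Fintype.linearCombination Rᵐᵒᵖ v) = LinearMap.ker p) :
    ProjectiveResolution (ModuleCat.of Rᵐᵒᵖ F) where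
  complex := presentationComplex v
  π := (ChainComplex.toSingle₀Equiv _ _).symm ⟨ModuleCat.ofHom p, by
    rw [presentationComplex_d_1_0]
    exact ModuleCat.hom_ext (LinearMap.ext fun x => hv.le ⟨x, rfl⟩)⟩
  quasiIso := ⟨fun n => by
    cases n with
    | zero =>
      have hexact : (ShortComplex.mk (ModuleCat.ofHom (Fintype.linearCombination Rᵐᵒᵖ v))
          (ModuleCat.ofHom p) (ModuleCat.hom_ext (LinearMap.ext fun x => hv.le ⟨x, rfl⟩))).Exact :=
        (ShortComplex.moduleCat_exact_iff_range_eq_ker _).2 hv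
      have hepi : Epi (ModuleCat.ofHom p) := (ModuleCat.epi_iff_surjective _).2 hp
      rw [ChainComplex.quasiIsoAt₀_iff, ShortComplex.quasiIso_iff_of_zeros']
      · refine (ShortComplex.exact_and_epi_g_iff_of_iso ?_).2 ⟨hexact, hepi⟩
        exact ShortComplex.isoMk (Iso.refl _) (Iso.refl _) (Iso.refl _) (by rfl) (by rfl)
      all_goals rfl
    | succ n =>
      rw [quasiIsoAt_iff_exactAt']
      · exact presentationComplex_exactAt_succ v n
      · exact ChainComplex.exactAt_succ_single_obj _ _⟩

theorem subsingleton_ext_one_iff (hp : Function.Surjective p)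
    (hv : LinearMap.range (Fintype.linearCombination Rᵐᵒᵖ v) = LinearMap.ker p)
    (M : Type) [AddCommGroup M] [Module Rᵐᵒᵖ M] :
    Subsingleton (((_root_.Ext ℤ (ModuleCat Rᵐᵒᵖ) 1).obj
        (Opposite.op (ModuleCat.of Rᵐᵒᵖ F))).obj (ModuleCat.of Rᵐᵒᵖ M)) ↔
      ∀ φ : (ι → Rᵐᵒᵖ) →ₗ[Rᵐᵒᵖ] M,
        LinearMap.ker (Fintype.linearCombination Rᵐᵒᵖ v) ≤ LinearMap.ker φ →
          ∃ ψ : (κ → Rᵐᵒᵖ) →ₗ[Rᵐᵒᵖ] M, ψ ∘ₗ Fintype.linearCombination Rᵐᵒᵖ v = φ := by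
  rw [← ModuleCat.isZero_iff_subsingleton,
    ((presentationResolution v hp hv).isoExt 1 _).isZero_iff,
    ← HomologicalComplex.exactAt_iff_isZero_homology,
    HomologicalComplex.exactAt_iff' _ 0 1 2 (by simp) (by simp), ShortComplex.moduleCat_exact_iff]
  change (∀ f : (presentationComplex v).X 1 ⟶ ModuleCat.of Rᵐᵒᵖ M,
      (presentationComplex v).d 2 1 ≫ f = 0 →
        ∃ g : (presentationComplex v).X 0 ⟶ ModuleCat.of Rᵐᵒᵖ M,
          (presentationComplex v).d 1 0 ≫ g = f) ↔ _
  simp only [presentationComplex_d_comp_eq_zero_iff, presentationComplex_d_1_0]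
  refine ⟨fun h φ hφ => ?_, fun h f hf => ?_⟩
  · obtain ⟨g, hg⟩ := h (ModuleCat.ofHom φ) hφ
    exact ⟨g.hom, congrArg ModuleCat.Hom.hom hg⟩
  · obtain ⟨ψ, hψ⟩ := h f.hom hf
    exact ⟨ModuleCat.ofHom ψ, ModuleCat.hom_ext hψ⟩

end Ext

open CategoryTheory in
/-- A right `R`-module `M` is absolutely pure iff `Ext¹(F, M) = 0` for every finitely
presented right `R`-module `F`. -/
theorem absolutelyPure_iff_ext_vanishes (R : Type) [Ring R]
    (M : Type) [AddCommGroup M] [Module Rᵐᵒᵖ M] :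
    AbsolutelyPure R M ↔
      ∀ (F : Type) [AddCommGroup F] [Module Rᵐᵒᵖ F], Module.FinitePresentation Rᵐᵒᵖ F →
        Subsingleton (((_root_.Ext ℤ (ModuleCat Rᵐᵒᵖ) 1).obj
          (Opposite.op (ModuleCat.of Rᵐᵒᵖ F))).obj (ModuleCat.of Rᵐᵒᵖ M)) := by
  rw [absolutelyPure_iff_isFPInjective]
  constructor
  · intro hM F _ _ hF
    obtain ⟨n, p, hp⟩ := Module.Finite.exists_fin' Rᵐᵒᵖ F
    obtain ⟨k, v, hv⟩ :=
      Submodule.fg_iff_exists_fin_generating_family.1 (Module.FinitePresentation.fg_ker p hp)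
    rw [← Fintype.range_linearCombination] at hv
    exact (subsingleton_ext_one_iff v hp hv M).2 (hM _ _ v)
  · intro hExt ι κ _ _ v
    let K := Submodule.span Rᵐᵒᵖ (Set.range v)
    have hv : LinearMap.range (Fintype.linearCombination Rᵐᵒᵖ v) = LinearMap.ker K.mkQ := by
      rw [Submodule.ker_mkQ, Fintype.range_linearCombination]
    have hF : Module.FinitePresentation Rᵐᵒᵖ ((κ → Rᵐᵒᵖ) ⧸ K) :=
      Module.finitePresentation_of_surjective K.mkQ K.mkQ_surjective <| by
        rw [Submodule.ker_mkQ]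
        exact Submodule.fg_span (Set.finite_range v)
    exact (subsingleton_ext_one_iff v K.mkQ_surjective hv M).1 (hExt _ hF)
end
end
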